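/- arXiv:2111.04556 — 5 statements merged into one kernel-verified Lean document; each statement's English description precedes it below -/
import Mathlib

section
/- Let M be a homogeneous NFA (all transitions into a state share the same label). Define the bit-parallel simulation: D₀ = {q₀}, and D_{i+1} = T(D_i) ∩ B(w_{i+1}) for an input word w = w₁…w_n, where T(X) is the set of states reachable in one step from X by any symbol and B(c) is the set of states that are targets of transitions labeled c. Then for every i, D_i equals the set of states reachable from q₀ by reading the prefix w₁…w_i; consequently M accepts w iff D_n ∩ F ≠ ∅. -/
/-!
In a homogeneous automaton the label of a transition is determined by its target, so a state
that has some incoming transition from `X` and some incoming `c`-transition has an incoming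
`c`-transition from `X`. Hence one step `X ↦ T X ∩ B c` of the bit-parallel simulation coincides
with the ordinary subset-construction step `δ_c`, and the two folds agree on every word.
-/

theorem succ_inter_targets_eq_step_of_homogeneous {Q A : Type*} {Δ : Set (Q × A × Q)}
    (homog : ∀ q a q' p b, (q, a, q') ∈ Δ → (p, b, q') ∈ Δ → a = b) (X : Set Q) (c : A) :
    {q' | ∃ q ∈ X, ∃ a, (q, a, q') ∈ Δ} ∩ {q' | ∃ q, (q, c, q') ∈ Δ} =
      {q' | ∃ q ∈ X, (q, c, q') ∈ Δ} := by
  ext q'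
  constructor
  · rintro ⟨⟨q, hq, a, ha⟩, p, hp⟩
    exact ⟨q, hq, homog q a q' p c ha hp ▸ ha⟩
  · rintro ⟨q, hq, h⟩
    exact ⟨⟨q, hq, c, h⟩, q, h⟩

/-- Correctness of the bit-parallel forward simulation
`D₀ = {q₀}`, `D_{i+1} = T(D_i) ∩ B(w_{i+1})` of a homogeneous NFA:
the simulated set equals the set of states reachable on each prefix, and the
automaton accepts `w` iff the final simulated set meets `F`. -/
theorem bit_parallel_forward_simulation {Q A : Type*}
    (Δ : Set (Q × A × Q)) (q0 : Q) (F : Set Q)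
    (homog : ∀ q a q' p b, (q, a, q') ∈ Δ → (p, b, q') ∈ Δ → a = b)
    (T : Set Q → Set Q) (B : A → Set Q)
    (hT : ∀ X, T X = {q' | ∃ q ∈ X, ∃ a, (q, a, q') ∈ Δ})
    (hB : ∀ c, B c = {q' | ∃ q, (q, c, q') ∈ Δ}) (w : List A) :
    (∀ u v : List A, w = u ++ v →
      u.foldl (fun D c => T D ∩ B c) {q0} =
        u.foldl (fun D c => {q' | ∃ q ∈ D, (q, c, q') ∈ Δ}) {q0}) ∧
    ((w.foldl (fun D c => T D ∩ B c) {q0} ∩ F).Nonempty ↔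
      (w.foldl (fun D c => {q' | ∃ q ∈ D, (q, c, q') ∈ Δ}) {q0} ∩ F).Nonempty) := by
  have step_eq : (fun D c => T D ∩ B c) =
      fun (D : Set Q) (c : A) => {q' | ∃ q ∈ D, (q, c, q') ∈ Δ} := by
    funext D c
    rw [hT, hB, succ_inter_targets_eq_step_of_homogeneous homog]
  rw [step_eq]
  exact ⟨fun _ _ _ => rfl, Iff.rfl⟩
end

section
/- Let M be a homogeneous NFA and define the reverse simulation: D₀ = F, and for an input word w = w₁…w_n processed right to left, D_{i+1} = T'(D_i ∩ B(w_{n-i})), where T'(X) = { q | ∃ q' ∈ X, ∃ a, (q,a,q') ∈ Δ } and B(c) is the set of targets of c-labeled transitions. Then q₀ ∈ D_n if and only if M accepts w. -/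
/-!
Reading an accepting run backwards, `q` can start a run on `c :: w` that ends in `F` iff `q` has a
`c`-successor that can start such a run on `w`; so the right-to-left fold of "`c`-predecessors"
from `F` is exactly the set of states from which `w` is accepted. Homogeneity is what lets the
simulation forget the label: every transition into a state of `B c` carries the label `c`, so
`T' (D ∩ B c)` is precisely the set of `c`-predecessors of `D`.
-/

namespace TransitionRelation

variable {Q A : Type*} (Δ : Set (Q × A × Q))

def successors (c : A) (S : Set Q) : Set Q := {q' | ∃ q ∈ S, (q, c, q') ∈ Δ}

def predecessors (c : A) (E : Set Q) : Set Q := {q | ∃ q' ∈ E, (q, c, q') ∈ Δ}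

def anyPredecessors (X : Set Q) : Set Q := {q | ∃ q' ∈ X, ∃ a, (q, a, q') ∈ Δ}

def targets (c : A) : Set Q := {q' | ∃ q, (q, c, q') ∈ Δ}

def IsHomogeneous : Prop := ∀ q a q' p b, (q, a, q') ∈ Δ → (p, b, q') ∈ Δ → a = b

theorem successors_inter_nonempty_iff (c : A) (S E : Set Q) :
    (successors Δ c S ∩ E).Nonempty ↔ (S ∩ predecessors Δ c E).Nonempty := by
  constructor
  · rintro ⟨q', ⟨q, hqS, hq⟩, hq'E⟩
    exact ⟨q, hqS, q', hq'E, hq⟩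
  · rintro ⟨q, hqS, q', hq'E, hq⟩
    exact ⟨q', ⟨q, hqS, hq⟩, hq'E⟩

theorem foldl_successors_inter_nonempty_iff (w : List A) (S F : Set Q) :
    (w.foldl (fun D c => successors Δ c D) S ∩ F).Nonempty ↔
      (S ∩ w.foldr (predecessors Δ) F).Nonempty := by
  induction w generalizing S with
  | nil => rfl
  | cons c w ih => rw [List.foldl_cons, ih, List.foldr_cons, successors_inter_nonempty_iff]

theorem IsHomogeneous.anyPredecessors_inter_targets (hΔ : IsHomogeneous Δ) (c : A) (E : Set Q) :
    anyPredecessors Δ (E ∩ targets Δ c) = predecessors Δ c E := by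
  ext q
  constructor
  · rintro ⟨q', ⟨hq'E, p, hp⟩, a, hq⟩
    obtain rfl : a = c := hΔ q a q' p c hq hp
    exact ⟨q', hq'E, hq⟩
  · rintro ⟨q', hq'E, hq⟩
    exact ⟨q', ⟨hq'E, q, hq⟩, c, hq⟩

end TransitionRelation

open TransitionRelation in
/-- Correctness of the reverse bit-parallel simulation
`D₀ = F`, `D_{i+1} = T'(D_i ∩ B(w_{n-i}))` (processing `w` right to left) of a
homogeneous NFA: the initial state `q₀` belongs to the final simulated set iff
the NFA accepts `w`. -/
theorem bit_parallel_reverse_simulation {Q A : Type*}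
    (Δ : Set (Q × A × Q)) (q0 : Q) (F : Set Q)
    (homog : ∀ q a q' p b, (q, a, q') ∈ Δ → (p, b, q') ∈ Δ → a = b)
    (T' : Set Q → Set Q) (B : A → Set Q)
    (hT' : ∀ X, T' X = {q | ∃ q' ∈ X, ∃ a, (q, a, q') ∈ Δ})
    (hB : ∀ c, B c = {q' | ∃ q, (q, c, q') ∈ Δ}) (w : List A) :
    q0 ∈ w.reverse.foldl (fun D c => T' (D ∩ B c)) F ↔
      (w.foldl (fun D c => {q' | ∃ q ∈ D, (q, c, q') ∈ Δ}) {q0} ∩ F).Nonempty := by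
  obtain rfl : T' = anyPredecessors Δ := funext hT'
  obtain rfl : B = targets Δ := funext hB
  have hstep :
      (fun D c => anyPredecessors Δ (D ∩ targets Δ c)) = fun D c => predecessors Δ c D :=
    funext₂ fun D c => IsHomogeneous.anyPredecessors_inter_targets Δ homog c D
  rw [hstep, List.foldl_reverse, ← Set.singleton_inter_nonempty]
  exact (foldl_successors_inter_nonempty_iff Δ w {q0} F).symm
end

section
/- With L, C and rank as above, the map LF(i) = C[L[i]] + rank_{L[i]}(L,i) is a bijection from [1..n] to [1..n], and it maps the positions of occurrences of symbol c, in left-to-right order, onto the contiguous interval [C[c]+1 .. C[c+1]]. -/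
/-! `LF` is strictly increasing for the lexicographic order on (symbol, position): every
occurrence of a smaller symbol gets a value at most `C[c]`, and among the occurrences of `c`
the rank runs through `1, …, #c` in order. Hence `LF` is injective, sends the occurrences of `c`
into `[C[c]+1, C[c+1]]` and all positions into `[1, n]`, and an injection into a finite set of
no larger size is onto it. -/

open Finset Function

theorem Set.InjOn.bijOn_of_ncard_le {α β : Type*} {f : α → β} {s : Set α} {t : Set β}
    (hf : Set.InjOn f s) (hmaps : Set.MapsTo f s t) (ht : t.Finite) (hcard : t.ncard ≤ s.ncard) :
    Set.BijOn f s t := by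
  refine ⟨hmaps, hf, ?_⟩
  have himage : f '' s = t :=
    Set.eq_of_subset_of_ncard_le hmaps.image_subset (by rwa [hf.ncard_image]) ht
  exact himage.symm.subset

namespace LFMapping

variable {ι : Type*} [Fintype ι] {σ : ℕ} (L : ι → Fin σ)

def countBelow (c : ℕ) : ℕ := #{j | (L j : ℕ) < c}

theorem countBelow_mono : Monotone (countBelow L) := fun _ _ hab =>
  card_le_card <| monotone_filter_right _ fun _ _ hj => hj.trans_le hab

theorem countBelow_le_card (c : ℕ) : countBelow L c ≤ Fintype.card ι :=
  card_filter_le _ _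

theorem countBelow_succ (c : Fin σ) :
    countBelow L (c + 1) = countBelow L c + #{j | L j = c} := by
  classical
  have hsplit : filter (fun j => (L j : ℕ) < c + 1) univ =
      filter (fun j => (L j : ℕ) < c ∨ L j = c) univ :=
    filter_congr fun j _ => by rw [Nat.lt_add_one_iff, le_iff_lt_or_eq, Fin.val_inj]
  rw [countBelow, countBelow, hsplit, filter_or, card_union_of_disjoint]
  exact disjoint_filter.mpr fun j _ hlt heq => hlt.ne (congrArg Fin.val heq)

variable [LinearOrder ι]

def rankUpTo (c : Fin σ) (i : ι) : ℕ := #{j | j ≤ i ∧ L j = c}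

def lf (i : ι) : ℕ := countBelow L (L i) + rankUpTo L (L i) i

theorem one_le_rankUpTo_self (i : ι) : 1 ≤ rankUpTo L (L i) i :=
  card_pos.mpr ⟨i, by simp⟩

theorem rankUpTo_le_count (c : Fin σ) (i : ι) : rankUpTo L c i ≤ #{j | L j = c} :=
  card_le_card <| monotone_filter_right _ fun _ _ hj => hj.2

theorem rankUpTo_lt_rankUpTo {c : Fin σ} {i j : ι} (hij : i < j) (hj : L j = c) :
    rankUpTo L c i < rankUpTo L c j := by
  refine card_lt_card ⟨monotone_filter_right _ fun _ _ hk => ⟨hk.1.trans hij.le, hk.2⟩, ?_⟩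
  intro hsub
  have := hsub (by simp [hj] : j ∈ filter (fun k => k ≤ j ∧ L k = c) univ)
  exact (mem_filter.mp this).2.1.not_gt hij

theorem lf_mem_Icc (i : ι) :
    lf L i ∈ Set.Icc (countBelow L (L i) + 1) (countBelow L (L i + 1)) := by
  rw [countBelow_succ]
  exact ⟨Nat.add_le_add_left (one_le_rankUpTo_self L i) _,
    Nat.add_le_add_left (rankUpTo_le_count L _ i) _⟩

theorem lf_lt_lf_of_toLex_lt {i j : ι} (h : toLex (L i, i) < toLex (L j, j)) :
    lf L i < lf L j := by
  rcases Prod.Lex.toLex_lt_toLex.mp h with hsymb | ⟨hsymb, hij⟩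
  · calc lf L i ≤ countBelow L (L i + 1) := (lf_mem_Icc L i).2
      _ ≤ countBelow L (L j) := countBelow_mono L (Fin.val_add_one_le_of_lt hsymb)
      _ < lf L j := (lf_mem_Icc L j).1
  · dsimp only at hsymb hij
    rw [lf, lf, hsymb]
    exact Nat.add_lt_add_left (rankUpTo_lt_rankUpTo L hij rfl) _

theorem lf_injective : Injective (lf L) := by
  intro i j h
  rcases lt_trichotomy (toLex (L i, i)) (toLex (L j, j)) with hlt | heq | hgt
  · exact absurd h (lf_lt_lf_of_toLex_lt L hlt).ne
  · exact congrArg Prod.snd (toLex.injective heq)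
  · exact absurd h (lf_lt_lf_of_toLex_lt L hgt).ne'

theorem lf_bijOn_univ : Set.BijOn (lf L) Set.univ (Set.Icc 1 (Fintype.card ι)) := by
  refine (lf_injective L).injOn.bijOn_of_ncard_le (fun i _ => ?_) (Set.finite_Icc _ _) ?_
  · exact ⟨le_add_self.trans (lf_mem_Icc L i).1,
      (lf_mem_Icc L i).2.trans (countBelow_le_card L _)⟩
  · simp [Set.ncard_univ]

theorem lf_bijOn_symbol (c : Fin σ) :
    Set.BijOn (lf L) {i | L i = c} (Set.Icc (countBelow L c + 1) (countBelow L (c + 1))) := by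
  refine (lf_injective L).injOn.bijOn_of_ncard_le (fun i (hi : L i = c) => hi ▸ lf_mem_Icc L i)
    (Set.finite_Icc _ _) ?_
  rw [Set.ncard_Icc_nat, countBelow_succ, Set.ncard_eq_toFinset_card', Set.toFinset_ofPred]
  omega

end LFMapping

open LFMapping

open Finset in
/-- the LF mapping `LF(i) = C[L[i]] + rank_{L[i]}(L,i)` is a
bijection from positions `[1..n]` onto `[1..n]`, and it maps the positions of
the occurrences of each symbol `c`, in left-to-right order, onto the contiguous
interval `[C[c]+1 .. C[c+1]]`. -/
theorem LF_bijection_and_intervals {n σ : ℕ} (L : Fin n → Fin σ)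
    (C : ℕ → ℕ) (hC : ∀ c, C c = (univ.filter (fun j => (L j : ℕ) < c)).card)
    (rank : Fin σ → Fin n → ℕ)
    (hrank : ∀ c i, rank c i = (univ.filter (fun j => j ≤ i ∧ L j = c)).card)
    (LF : Fin n → ℕ) (hLF : ∀ i, LF i = C (L i) + rank (L i) i) :
    Set.BijOn LF Set.univ (Set.Icc 1 n) ∧
    (∀ c : Fin σ,
      Set.BijOn LF {i | L i = c} (Set.Icc (C c + 1) (C ((c : ℕ) + 1))) ∧
      ∀ i j : Fin n, L i = c → L j = c → i < j → LF i < LF j) := by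
  have hLF_eq : LF = lf L := funext fun i => by rw [hLF, hC, hrank]; rfl
  have hC_eq : C = countBelow L := funext hC
  subst hLF_eq hC_eq
  refine ⟨by simpa using lf_bijOn_univ L, fun c => ⟨lf_bijOn_symbol L c, ?_⟩⟩
  intro i j hi hj hij
  exact lf_lt_lf_of_toLex_lt L (Prod.Lex.toLex_lt_toLex.mpr (.inr ⟨hi.trans hj.symm, hij⟩))
end

section
/- Distinct-symbol enumeration bound: in a perfect binary wavelet tree over alphabet [1..σ] (σ a power of two), the set of internal tree nodes visited by the range-enumeration algorithm on an interval [b..e] — which descends from the root and prunes every child whose mapped interval is empty — consists exactly of the ancestors of the leaves of symbols occurring in L[b..e]; hence the number of visited nodes is at most d·log₂σ + 1, where d is the number of distinct symbols in L[b..e]. -/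
/-- The slice `S[b..e]` of a string (1-based, inclusive). -/
def strSlice {α : Type*} (S : List α) (b e : ℕ) : List α := (S.take e).drop (b - 1)

/-- The set of nodes of a perfect binary wavelet tree visited by the
range-enumeration algorithm. Nodes are identified with the bit-path from the
root (leaves are the symbols, encoded as bit-strings of length `m = log₂ σ`);
`occ` is the set of symbols occurring in the queried range `L[b..e]`. The
algorithm starts at the root and descends to a child iff its mapped interval
is nonempty, i.e., iff some symbol of `occ` lies below that child (has the
child's bit-path as a prefix). -/
inductive WTVisited (occ : Set (List Bool)) : List Bool → Prop
  | root : WTVisited occ []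
  | child (v : List Bool) (b : Bool) : WTVisited occ v →
      (∃ c ∈ occ, (v ++ [b]) <+: c) → WTVisited occ (v ++ [b])

/-! The visited nodes are closed under taking prefixes and, apart from the root, each lies
above some occurring symbol; conversely every prefix of an occurring symbol is reached by
descending along it. A node of depth `< m` above a symbol `c` is `c.take k` for some `k < m`,
so there are at most `d·m` of them, plus possibly the root when nothing occurs. -/

namespace WTVisited

variable {occ : Set (List Bool)}

theorem of_prefix {c : List Bool} (hc : c ∈ occ) {v : List Bool} (hv : v <+: c) :
    WTVisited occ v := by
  induction v using List.reverseRecOn with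
  | nil => exact root
  | append_singleton w b ih =>
    exact child w b (ih ((w.prefix_append [b]).trans hv)) ⟨c, hc, hv⟩

theorem eq_nil_or_exists_prefix {v : List Bool} (hv : WTVisited occ v) :
    v = [] ∨ ∃ c ∈ occ, v <+: c := by
  cases hv with
  | root => exact .inl rfl
  | child w b _ hwb => exact .inr hwb

theorem iff_exists_prefix (hne : occ.Nonempty) {v : List Bool} :
    WTVisited occ v ↔ ∃ c ∈ occ, v <+: c := by
  refine ⟨fun hv => ?_, fun ⟨c, hc, hv⟩ => of_prefix hc hv⟩
  obtain rfl | hpre := hv.eq_nil_or_exists_prefix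
  · obtain ⟨c, hc⟩ := hne
    exact ⟨c, hc, List.nil_prefix⟩
  · exact hpre

end WTVisited

section ShortPrefixes

variable {α : Type*} {S : Set (List α)}

theorem short_prefixes_subset_image_take (m : ℕ) :
    {v | v.length < m ∧ ∃ c ∈ S, v <+: c} ⊆
      (fun p : List α × ℕ => p.1.take p.2) '' (S ×ˢ Set.Iio m) := by
  rintro v ⟨hlt, c, hc, hv⟩
  exact ⟨(c, v.length), ⟨hc, hlt⟩, (List.prefix_iff_eq_take.mp hv).symm⟩

theorem Set.Finite.short_prefixes (hS : S.Finite) (m : ℕ) :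
    {v | v.length < m ∧ ∃ c ∈ S, v <+: c}.Finite :=
  ((hS.prod (Set.finite_Iio m)).image _).subset (short_prefixes_subset_image_take m)

theorem ncard_short_prefixes_le (hS : S.Finite) (m : ℕ) :
    {v | v.length < m ∧ ∃ c ∈ S, v <+: c}.ncard ≤ S.ncard * m :=
  calc _ ≤ ((fun p : List α × ℕ => p.1.take p.2) '' (S ×ˢ Set.Iio m)).ncard :=
        Set.ncard_le_ncard (short_prefixes_subset_image_take m)
          ((hS.prod (Set.finite_Iio m)).image _)
    _ ≤ (S ×ˢ Set.Iio m).ncard := Set.ncard_image_le (hS.prod (Set.finite_Iio m))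
    _ = S.ncard * m := by rw [Set.ncard_prod, Set.ncard_Iio_nat]

end ShortPrefixes

theorem wavelet_enumeration_bound_general (m : ℕ) (L : List (List Bool)) (b e : ℕ)
    (occ : Set (List Bool)) (hocc : occ = {c | c ∈ strSlice L b e}) :
    (occ.Nonempty →
      {v | WTVisited occ v ∧ v.length < m} =
        {v | v.length < m ∧ ∃ c ∈ occ, v <+: c}) ∧
    {v | WTVisited occ v ∧ v.length < m}.ncard ≤ occ.ncard * m + 1 := by
  have hfin : occ.Finite := hocc ▸ (strSlice L b e).finite_toSet
  refine ⟨fun hne => ?_, ?_⟩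
  · ext v
    simp only [Set.mem_ofPred_eq, WTVisited.iff_exists_prefix hne, and_comm]
  · have hsub : {v | WTVisited occ v ∧ v.length < m} ⊆
        insert [] {v | v.length < m ∧ ∃ c ∈ occ, v <+: c} := by
      rintro v ⟨hv, hlt⟩
      obtain rfl | hpre := hv.eq_nil_or_exists_prefix
      · exact Set.mem_insert _ _
      · exact Set.mem_insert_of_mem _ ⟨hlt, hpre⟩
    calc _ ≤ (insert [] {v | v.length < m ∧ ∃ c ∈ occ, v <+: c}).ncard :=
          Set.ncard_le_ncard hsub ((hfin.short_prefixes m).insert _)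
      _ ≤ {v | v.length < m ∧ ∃ c ∈ occ, v <+: c}.ncard + 1 := Set.ncard_insert_le _ _
      _ ≤ occ.ncard * m + 1 := by gcongr; exact ncard_short_prefixes_le hfin m

/-- distinct-symbol enumeration bound. In a perfect binary
wavelet tree over the alphabet `[1..σ]` with `σ = 2^m` (symbols = bit-strings
of length `m`), for the range-enumeration algorithm on an interval `[b..e]` of
the string `L`: the set of internal nodes visited consists exactly of the
ancestors (prefixes, including the node itself) of the leaves of the symbols
occurring in `L[b..e]`; hence the number of visited internal nodes is at most
`d·log₂σ + 1`, where `d` is the number of distinct symbols in `L[b..e]`. -/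
theorem wavelet_enumeration_bound (m : ℕ) (L : List (List Bool))
    (hlen : ∀ c ∈ L, c.length = m) (b e : ℕ)
    (occ : Set (List Bool)) (hocc : occ = {c | c ∈ strSlice L b e}) :
    (occ.Nonempty →
      {v | WTVisited occ v ∧ v.length < m} =
        {v | v.length < m ∧ ∃ c ∈ occ, v <+: c}) ∧
    {v | WTVisited occ v ∧ v.length < m}.ncard ≤ occ.ncard * m + 1 :=
  wavelet_enumeration_bound_general m L b e occ hocc
end

section
/- Pruned enumeration with state filtering is correct: let each symbol p carry a bitmask B(p) ⊆ Q, extend B to wavelet tree nodes v by B(v) = ⋃ of B(p) over leaves p below v, and fix a query mask D ⊆ Q. The algorithm that traverses the wavelet tree on interval [b..e], pruning any node v with (D ∩ B(v) = ∅) or an empty mapped interval, reaches exactly the leaves of those symbols p that occur in L[b..e] and satisfy D ∩ B(p) ≠ ∅. -/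
/-- The bitmask of a wavelet-tree node `v` (a bit-path from the root):
the union of the masks `B(p)` of the leaves `p` (symbols, i.e., bit-strings of
length `m`) lying below `v`. -/
def Bext {Q : Type*} (m : ℕ) (B : List Bool → Set Q) (v : List Bool) : Set Q :=
  {q | ∃ c : List Bool, c.length = m ∧ v <+: c ∧ q ∈ B c}

/-- The wavelet-tree traversal on the symbols `occ` occurring in the queried
range, pruning every node `v` whose mask does not intersect the query mask `D`
(`D ∩ B(v) = ∅`) or whose mapped interval is empty (no occurring symbol lies
below `v`). `FReach v` holds iff the traversal arrives at node `v` without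
pruning it. -/
inductive FReach {Q : Type*} (m : ℕ) (occ : Set (List Bool))
    (B : List Bool → Set Q) (D : Set Q) : List Bool → Prop
  | root : (D ∩ Bext m B []).Nonempty → (∃ c, c ∈ occ) →
      FReach m occ B D []
  | child (v : List Bool) (b : Bool) : FReach m occ B D v →
      (D ∩ Bext m B (v ++ [b])).Nonempty → (∃ c ∈ occ, (v ++ [b]) <+: c) →
      FReach m occ B D (v ++ [b])

/-! Both pruning conditions are inherited by ancestors: a node's mask contains the masks of
its descendants, and a symbol below a node lies below each of its ancestors. Hence the
traversal reaches exactly the nodes that pass both tests themselves, and at a leaf `p` these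
tests read `p ∈ occ` and `D ∩ B(p) ≠ ∅`. -/

theorem Bext_subset_of_prefix {Q : Type*} (m : ℕ) (B : List Bool → Set Q) {v w : List Bool}
    (hvw : v <+: w) : Bext m B w ⊆ Bext m B v :=
  fun _ ⟨c, hc, hwc, hq⟩ => ⟨c, hc, hvw.trans hwc, hq⟩

theorem Bext_of_length_eq {Q : Type*} {m : ℕ} (B : List Bool → Set Q) {p : List Bool}
    (hp : p.length = m) : Bext m B p = B p := by
  ext q
  constructor
  · rintro ⟨c, hc, hpc, hq⟩
    rwa [hpc.eq_of_length (hp.trans hc.symm)]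
  · exact fun hq => ⟨p, hp, List.prefix_refl p, hq⟩

theorem fReach_iff {Q : Type*} (m : ℕ) (occ : Set (List Bool)) (B : List Bool → Set Q)
    (D : Set Q) (v : List Bool) :
    FReach m occ B D v ↔ (∃ c ∈ occ, v <+: c) ∧ (D ∩ Bext m B v).Nonempty := by
  constructor
  · rintro (⟨hD, c, hc⟩ | ⟨v, b, -, hD, hocc⟩)
    · exact ⟨⟨c, hc, List.nil_prefix⟩, hD⟩
    · exact ⟨hocc, hD⟩
  · induction v using List.reverseRecOn with
    | nil => exact fun ⟨⟨c, hc, _⟩, hD⟩ => FReach.root hD ⟨c, hc⟩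
    | append_singleton v b ih =>
      rintro ⟨⟨c, hc, hvc⟩, hD⟩
      have hv : v <+: v ++ [b] := List.prefix_append v [b]
      refine FReach.child v b (ih ⟨⟨c, hc, hv.trans hvc⟩, ?_⟩) hD ⟨c, hc, hvc⟩
      exact hD.mono (Set.inter_subset_inter_right D (Bext_subset_of_prefix m B hv))

theorem mem_of_mem_strSlice {α : Type*} {S : List α} {b e : ℕ} {a : α}
    (ha : a ∈ strSlice S b e) : a ∈ S :=
  List.mem_of_mem_take (List.mem_of_mem_drop ha)

theorem exists_mem_prefix_iff_mem {α : Type*} {occ : Set (List α)} {m : ℕ}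
    (hocc : ∀ c ∈ occ, c.length = m) {p : List α} (hp : p.length = m) :
    (∃ c ∈ occ, p <+: c) ↔ p ∈ occ :=
  ⟨fun ⟨c, hc, hpc⟩ => hpc.eq_of_length (hp.trans (hocc c hc).symm) ▸ hc,
    fun hp' => ⟨p, hp', List.prefix_refl p⟩⟩

/-- pruned enumeration with state filtering is correct: the
traversal reaches exactly the leaves of those symbols `p` that occur in
`L[b..e]` and satisfy `D ∩ B(p) ≠ ∅`. -/
theorem filtered_enumeration_correct {Q : Type*} (m : ℕ)
    (L : List (List Bool)) (hlen : ∀ c ∈ L, c.length = m) (b e : ℕ)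
    (occ : Set (List Bool)) (hocc : occ = {c | c ∈ strSlice L b e})
    (B : List Bool → Set Q) (D : Set Q) :
    ∀ p : List Bool, p.length = m →
      (FReach m occ B D p ↔ p ∈ occ ∧ (D ∩ B p).Nonempty) := by
  intro p hp
  have hoccLen : ∀ c ∈ occ, c.length = m := by
    subst hocc
    exact fun c hc => hlen c (mem_of_mem_strSlice hc)
  rw [fReach_iff, exists_mem_prefix_iff_mem hoccLen hp, Bext_of_length_eq B hp]
end
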